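/- arXiv:1406.0067 — 4 statements merged into one kernel-verified Lean document; each statement's English description precedes it below -/
import Mathlib

section
/- Let x, y, x̄, ȳ be unit vectors in ℝⁿ with ⟨x,y⟩ = ⟨x̄,ȳ⟩ = 0. Let P and P̄ be the orthogonal projections onto span{x,y} and span{x̄,ȳ} respectively. If ‖P − P̄‖ ≤ ε (operator norm), then there exists a 2×2 orthogonal matrix K such that ‖(x,y)K − (x̄,ȳ)‖_F ≤ 9ε, where (x,y) denotes the n×2 matrix with columns x and y and ‖·‖_F is the Frobenius norm. -/
open Matrix

/-- Frobenius norm of a rectangular real matrix. -/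
noncomputable def frobNorm {m n : ℕ} (M : Matrix (Fin m) (Fin n) ℝ) : ℝ :=
  Real.sqrt (∑ i, ∑ j, (M i j) ^ 2)

/-- Spectral (operator) norm of a rectangular real matrix, acting between Euclidean spaces. -/
noncomputable def opN {m n : ℕ} (M : Matrix (Fin m) (Fin n) ℝ) : ℝ :=
  ‖LinearMap.toContinuousLinearMap (Matrix.toEuclideanLin M)‖

lemma opN_nonneg {m n : ℕ} (M : Matrix (Fin m) (Fin n) ℝ) : 0 ≤ opN M := norm_nonneg _

lemma opN_bound {m n : ℕ} (M : Matrix (Fin m) (Fin n) ℝ) (w : Fin n → ℝ) :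
    ∑ i, (M.mulVec w i)^2 ≤ (opN M)^2 * ∑ i, (w i)^2 := by
  have h := (LinearMap.toContinuousLinearMap (Matrix.toEuclideanLin M)).le_opNorm
      ((WithLp.equiv 2 (Fin n → ℝ)).symm w)
  have hnorm : ∀ (k : ℕ) (v : Fin k → ℝ),
      ‖(WithLp.equiv 2 (Fin k → ℝ)).symm v‖ = Real.sqrt (∑ i, (v i)^2) := by
    intro k v
    rw [EuclideanSpace.norm_eq]
    congr 1; apply Finset.sum_congr rfl; intro i _
    simp [sq_abs]
  have happ : (LinearMap.toContinuousLinearMap (Matrix.toEuclideanLin M))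
      ((WithLp.equiv 2 (Fin n → ℝ)).symm w) = (WithLp.equiv 2 (Fin m → ℝ)).symm (M *ᵥ w) := rfl
  rw [happ, hnorm, hnorm] at h
  have h1 : 0 ≤ ∑ i, (M.mulVec w i)^2 := Finset.sum_nonneg fun i _ => sq_nonneg _
  have h2 : 0 ≤ ∑ i, (w i)^2 := Finset.sum_nonneg fun i _ => sq_nonneg _
  have hop : opN M = ‖LinearMap.toContinuousLinearMap (Matrix.toEuclideanLin M)‖ := rfl
  rw [← hop] at h
  nlinarith [Real.sq_sqrt h1, Real.sq_sqrt h2, Real.sqrt_nonneg (∑ i, (w i)^2), opN_nonneg M,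
    Real.sqrt_nonneg (∑ i, (M.mulVec w i)^2)]

set_option maxHeartbeats 1000000 in
lemma polar_facts (ε a b c d t : ℝ) (hε0 : 0 ≤ ε) (htr : ε < 1/2)
    (hA1 : 1 - a^2 - c^2 ≤ ε^2) (hA2 : 1 - b^2 - d^2 ≤ ε^2)
    (hA3 : 1 - c^2 - d^2 ≤ ε^2) (hA4 : c^2 + d^2 - (a*d - b*c)^2 ≤ ε^2 * (c^2 + d^2))
    (hdpos : 0 ≤ a*d - b*c) (ht0 : 0 ≤ t) (ht2 : t^2 = (a+d)^2 + (c-b)^2) :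
    0 < t ∧ ((a+d)/t)^2 + ((c-b)/t)^2 = 1 ∧ ((a+d)/t)*(a+d) + ((c-b)/t)*(c-b) = t
      ∧ 4 - 2*t ≤ (9*ε)^2 := by
  have hεsq : ε^2 < 1/4 := by nlinarith
  have hdet2 : (1 - ε^2)^2 ≤ (a*d - b*c)^2 := by nlinarith [hA3, hA4, hεsq]
  have hdet1 : 1 - ε^2 ≤ a*d - b*c := by nlinarith [hdet2, hdpos, hεsq]
  have htlb : 4*(1 - ε^2) ≤ t^2 := by linarith [hA1, hA2, hdet1, ht2]
  have htpos : 0 < t := by nlinarith [htlb, hεsq, ht0]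
  have htge : 2 - 2*ε^2 ≤ t := by
    nlinarith [htlb, htpos, hεsq, sq_nonneg ε]
  have htne : t ≠ 0 := ne_of_gt htpos
  refine ⟨htpos, ?_, ?_, ?_⟩
  · field_simp
    linarith [ht2]
  · field_simp
    nlinarith [ht2]
  · nlinarith [htge, sq_nonneg ε, hε0]

set_option maxHeartbeats 1000000 in
theorem stmt0 (n : ℕ) (ε : ℝ) (x y xb yb : Fin n → ℝ)
    (hx : ∑ i, x i ^ 2 = 1) (hy : ∑ i, y i ^ 2 = 1)
    (hxb : ∑ i, xb i ^ 2 = 1) (hyb : ∑ i, yb i ^ 2 = 1)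
    (hxy : ∑ i, x i * y i = 0) (hxbyb : ∑ i, xb i * yb i = 0)
    (hP : opN (vecMulVec x x + vecMulVec y y - (vecMulVec xb xb + vecMulVec yb yb)) ≤ ε) :
    ∃ K : Matrix (Fin 2) (Fin 2) ℝ, Kᵀ * K = 1 ∧
      frobNorm ((Matrix.of fun (i : Fin n) (j : Fin 2) => if j = 0 then x i else y i) * K
        - Matrix.of fun (i : Fin n) (j : Fin 2) => if j = 0 then xb i else yb i) ≤ 9 * ε := by
  set D := vecMulVec x x + vecMulVec y y - (vecMulVec xb xb + vecMulVec yb yb) with hD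
  set a := ∑ i, x i * xb i with ha
  set b := ∑ i, x i * yb i with hb
  set c := ∑ i, y i * xb i with hc
  set d := ∑ i, y i * yb i with hd
  have hε0 : 0 ≤ ε := le_trans (opN_nonneg D) hP
  -- expansion of sums of squares of linear combinations
  have expand : ∀ p q r s : ℝ,
      ∑ i, (p * x i + q * y i + r * xb i + s * yb i)^2 =
        p^2 + q^2 + r^2 + s^2 + 2*p*r*a + 2*p*s*b + 2*q*r*c + 2*q*s*d := by
    intro p q r s
    have e : ∀ i, (p * x i + q * y i + r * xb i + s * yb i)^2 =
        p^2*(x i)^2 + q^2*(y i)^2 + r^2*(xb i)^2 + s^2*(yb i)^2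
        + (2*p*q)*(x i * y i) + (2*p*r)*(x i * xb i) + (2*p*s)*(x i * yb i)
        + (2*q*r)*(y i * xb i) + (2*q*s)*(y i * yb i) + (2*r*s)*(xb i * yb i) := by
      intro i; ring
    rw [Finset.sum_congr rfl fun i _ => e i]
    simp only [Finset.sum_add_distrib, ← Finset.mul_sum]
    rw [hx, hy, hxb, hyb, hxy, hxbyb, ← ha, ← hb, ← hc, ← hd]
    ring
  -- the master quadratic-form inequality from the operator norm bound
  have master : ∀ p q r s : ℝ,
      (p + r*a + s*b)^2 + (q + r*c + s*d)^2 + (-(p*a + q*c + r))^2 + (-(p*b + q*d + s))^2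
        + 2*(p + r*a + s*b)*(-(p*a + q*c + r))*a + 2*(p + r*a + s*b)*(-(p*b + q*d + s))*b
        + 2*(q + r*c + s*d)*(-(p*a + q*c + r))*c + 2*(q + r*c + s*d)*(-(p*b + q*d + s))*d
      ≤ ε^2 * (p^2 + q^2 + r^2 + s^2 + 2*p*r*a + 2*p*s*b + 2*q*r*c + 2*q*s*d) := by
    intro p q r s
    have dotx : ∑ j, x j * (p * x j + q * y j + r * xb j + s * yb j) = p + r*a + s*b := by
      have e : ∀ j, x j * (p * x j + q * y j + r * xb j + s * yb j) =
          p*(x j)^2 + q*(x j * y j) + r*(x j * xb j) + s*(x j * yb j) := fun j => by ring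
      rw [Finset.sum_congr rfl fun j _ => e j]
      simp only [Finset.sum_add_distrib, ← Finset.mul_sum]
      rw [hx, hxy, ← ha, ← hb]; ring
    have doty : ∑ j, y j * (p * x j + q * y j + r * xb j + s * yb j) = q + r*c + s*d := by
      have e : ∀ j, y j * (p * x j + q * y j + r * xb j + s * yb j) =
          p*(x j * y j) + q*(y j)^2 + r*(y j * xb j) + s*(y j * yb j) := fun j => by ring
      rw [Finset.sum_congr rfl fun j _ => e j]
      simp only [Finset.sum_add_distrib, ← Finset.mul_sum]
      rw [hy, hxy, ← hc, ← hd]; ring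
    have dotxb : ∑ j, xb j * (p * x j + q * y j + r * xb j + s * yb j) = p*a + q*c + r := by
      have e : ∀ j, xb j * (p * x j + q * y j + r * xb j + s * yb j) =
          p*(x j * xb j) + q*(y j * xb j) + r*(xb j)^2 + s*(xb j * yb j) := fun j => by ring
      rw [Finset.sum_congr rfl fun j _ => e j]
      simp only [Finset.sum_add_distrib, ← Finset.mul_sum]
      rw [hxb, hxbyb, ← ha, ← hc]; ring
    have dotyb : ∑ j, yb j * (p * x j + q * y j + r * xb j + s * yb j) = p*b + q*d + s := by
      have e : ∀ j, yb j * (p * x j + q * y j + r * xb j + s * yb j) =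
          p*(x j * yb j) + q*(y j * yb j) + r*(xb j * yb j) + s*(yb j)^2 := fun j => by ring
      rw [Finset.sum_congr rfl fun j _ => e j]
      simp only [Finset.sum_add_distrib, ← Finset.mul_sum]
      rw [hyb, hxbyb, ← hb, ← hd]; ring
    have hmv : ∀ i, D.mulVec (fun j => p * x j + q * y j + r * xb j + s * yb j) i =
        (p + r*a + s*b) * x i + (q + r*c + s*d) * y i
        + (-(p*a + q*c + r)) * xb i + (-(p*b + q*d + s)) * yb i := by
      intro i
      have e : ∀ j, D i j * (p * x j + q * y j + r * xb j + s * yb j) =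
          x i * (x j * (p * x j + q * y j + r * xb j + s * yb j))
          + y i * (y j * (p * x j + q * y j + r * xb j + s * yb j))
          - xb i * (xb j * (p * x j + q * y j + r * xb j + s * yb j))
          - yb i * (yb j * (p * x j + q * y j + r * xb j + s * yb j)) := by
        intro j
        rw [hD]
        simp only [Matrix.add_apply, Matrix.sub_apply, Matrix.vecMulVec_apply]
        ring
      show ∑ j, D i j * (p * x j + q * y j + r * xb j + s * yb j) = _
      rw [Finset.sum_congr rfl fun j _ => e j]
      simp only [Finset.sum_sub_distrib, Finset.sum_add_distrib, ← Finset.mul_sum]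
      rw [dotx, doty, dotxb, dotyb]; ring
    have h1 := opN_bound D (fun j => p * x j + q * y j + r * xb j + s * yb j)
    rw [Finset.sum_congr rfl fun i _ => congrArg (· ^ 2) (hmv i)] at h1
    rw [expand (p + r*a + s*b) (q + r*c + s*d) (-(p*a + q*c + r)) (-(p*b + q*d + s)),
        expand p q r s] at h1
    have h2 : (opN D)^2 ≤ ε^2 := by nlinarith [opN_nonneg D]
    have h3 : (0:ℝ) ≤ p^2 + q^2 + r^2 + s^2 + 2*p*r*a + 2*p*s*b + 2*q*r*c + 2*q*s*d := by
      rw [← expand p q r s]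
      exact Finset.sum_nonneg fun i _ => sq_nonneg _
    exact h1.trans (mul_le_mul_of_nonneg_right h2 h3)

  -- Frobenius norm expansion for explicit 2x2 matrices
  have frob : ∀ k00 k01 k10 k11 : ℝ,
      ∑ i, ∑ j, (((Matrix.of fun (i : Fin n) (j : Fin 2) => if j = 0 then x i else y i)
          * !![k00, k01; k10, k11]
          - Matrix.of fun (i : Fin n) (j : Fin 2) => if j = 0 then xb i else yb i) i j)^2
        = (k00^2 + k10^2 + 1 - 2*k00*a - 2*k10*c) + (k01^2 + k11^2 + 1 - 2*k01*b - 2*k11*d) := by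
    intro k00 k01 k10 k11
    have e : ∀ i : Fin n,
        (∑ j : Fin 2, (((Matrix.of fun (i : Fin n) (j : Fin 2) => if j = 0 then x i else y i)
          * !![k00, k01; k10, k11]
          - Matrix.of fun (i : Fin n) (j : Fin 2) => if j = 0 then xb i else yb i) i j)^2)
        = (k00 * x i + k10 * y i + (-1) * xb i + 0 * yb i)^2
          + (k01 * x i + k11 * y i + 0 * xb i + (-1) * yb i)^2 := by
      intro i
      rw [Fin.sum_univ_two]
      simp [Matrix.sub_apply, Matrix.mul_apply, Fin.sum_univ_two]
      ring
    rw [Finset.sum_congr rfl fun i _ => e i, Finset.sum_add_distrib, expand, expand]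
    ring
  by_cases htr : 1/2 ≤ ε
  · -- trivial branch : K = identity
    refine ⟨!![1, 0; 0, 1], ?_, ?_⟩
    · ext i j; fin_cases i <;> fin_cases j <;>
        simp [Matrix.mul_apply, Fin.sum_univ_two, Matrix.one_apply, Matrix.transpose_apply, Matrix.vecHead, Matrix.vecTail]
    · have h0 := Finset.sum_nonneg (s := Finset.univ)
        (fun i _ => sq_nonneg (1 * x i + 0 * y i + 1 * xb i + 0 * yb i))
      rw [expand 1 0 1 0] at h0
      have h1 := Finset.sum_nonneg (s := Finset.univ)
        (fun i _ => sq_nonneg (0 * x i + 1 * y i + 0 * xb i + 1 * yb i))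
      rw [expand 0 1 0 1] at h1
      unfold frobNorm
      rw [frob 1 0 0 1]
      have hle : (1^2 + 0^2 + 1 - 2*1*a - 2*0*c) + (0^2 + 1^2 + 1 - 2*0*b - 2*1*d) ≤ (9*ε)^2 := by
        nlinarith [h0, h1, htr, hε0]
      calc Real.sqrt ((1^2 + 0^2 + 1 - 2*1*a - 2*0*c) + (0^2 + 1^2 + 1 - 2*0*b - 2*1*d))
          ≤ Real.sqrt ((9*ε)^2) := Real.sqrt_le_sqrt hle
        _ = 9*ε := Real.sqrt_sq (by positivity)
  · push_neg at htr
    -- scalar consequences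
    have hA1 : 1 - a^2 - c^2 ≤ ε^2 := by have h := master 0 0 1 0; linarith [h]
    have hA2 : 1 - b^2 - d^2 ≤ ε^2 := by have h := master 0 0 0 1; linarith [h]
    have hA3 : 1 - c^2 - d^2 ≤ ε^2 := by have h := master 0 1 0 0; linarith [h]
    have hA4 : c^2 + d^2 - (a*d - b*c)^2 ≤ ε^2 * (c^2 + d^2) := by
      have h := master 0 0 d (-c); linarith [h]
    by_cases hdpos : 0 ≤ a*d - b*c
    · -- rotation case
      set t := Real.sqrt ((a+d)^2 + (c-b)^2) with htdef
      have ht2 : t^2 = (a+d)^2 + (c-b)^2 := Real.sq_sqrt (by positivity)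
      obtain ⟨htpos, hpq, hval, hle⟩ :=
        polar_facts ε a b c d t hε0 htr hA1 hA2 hA3 hA4 hdpos (Real.sqrt_nonneg _) ht2
      refine ⟨!![(a+d)/t, -((c-b)/t); (c-b)/t, (a+d)/t], ?_, ?_⟩
      · ext i j; fin_cases i <;> fin_cases j <;>
          simp [Matrix.mul_apply, Fin.sum_univ_two, Matrix.one_apply, Matrix.transpose_apply,
            Matrix.vecHead, Matrix.vecTail] <;>
          first
            | linear_combination hpq
            | ring
      · unfold frobNorm
        rw [frob ((a+d)/t) (-((c-b)/t)) ((c-b)/t) ((a+d)/t)]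
        have hfe : ((a+d)/t)^2 + ((c-b)/t)^2 + 1 - 2*((a+d)/t)*a - 2*((c-b)/t)*c
            + ((-((c-b)/t))^2 + ((a+d)/t)^2 + 1 - 2*(-((c-b)/t))*b - 2*((a+d)/t)*d)
            = 4 - 2*t := by linear_combination 2 * hpq - 2 * hval
        rw [hfe]
        calc Real.sqrt (4 - 2*t) ≤ Real.sqrt ((9*ε)^2) := Real.sqrt_le_sqrt hle
          _ = 9*ε := Real.sqrt_sq (by positivity)
    · -- reflection case
      push_neg at hdpos
      set t := Real.sqrt ((a-d)^2 + (b+c)^2) with htdef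
      have ht2 : t^2 = (a + -d)^2 + (-c - b)^2 := by
        rw [htdef, Real.sq_sqrt (by positivity)]; ring
      have hA1' : 1 - a^2 - (-c)^2 ≤ ε^2 := by linarith [hA1]
      have hA2' : 1 - b^2 - (-d)^2 ≤ ε^2 := by linarith [hA2]
      have hA3' : 1 - (-c)^2 - (-d)^2 ≤ ε^2 := by linarith [hA3]
      have hA4' : (-c)^2 + (-d)^2 - (a*(-d) - b*(-c))^2 ≤ ε^2 * ((-c)^2 + (-d)^2) := by
        linarith [hA4]
      have hdpos' : 0 ≤ a*(-d) - b*(-c) := by linarith [hdpos]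
      obtain ⟨htpos, hpq, hval, hle⟩ :=
        polar_facts ε a b (-c) (-d) t hε0 htr hA1' hA2' hA3' hA4' hdpos' (Real.sqrt_nonneg _) ht2
      refine ⟨!![(a + -d)/t, -((-c - b)/t); -((-c - b)/t), -((a + -d)/t)], ?_, ?_⟩
      · ext i j; fin_cases i <;> fin_cases j <;>
          simp [Matrix.mul_apply, Fin.sum_univ_two, Matrix.one_apply, Matrix.transpose_apply,
            Matrix.vecHead, Matrix.vecTail] <;>
          first
            | linear_combination hpq
            | ring
      · unfold frobNorm
        rw [frob ((a + -d)/t) (-((-c - b)/t)) (-((-c - b)/t)) (-((a + -d)/t))]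
        have hfe : ((a + -d)/t)^2 + (-((-c - b)/t))^2 + 1 - 2*((a + -d)/t)*a - 2*(-((-c - b)/t))*c
            + ((-((-c - b)/t))^2 + (-((a + -d)/t))^2 + 1 - 2*(-((-c - b)/t))*b - 2*(-((a + -d)/t))*d)
            = 4 - 2*t := by linear_combination 2 * hpq - 2 * hval
        rw [hfe]
        calc Real.sqrt (4 - 2*t) ≤ Real.sqrt ((9*ε)^2) := Real.sqrt_le_sqrt hle
          _ = 9*ε := Real.sqrt_sq (by positivity)
end

section
/- Let B be a symmetric n×n real matrix of rank m with eigendecomposition B = Σ_{i=1}^m ρ_i u_i u_iᵀ, and let U_B be the m×n matrix whose rows are the orthonormal eigenvectors u_iᵀ. Then for any vectors e, s ∈ [−1,1]ⁿ, ‖B(e − s)‖ ≤ ‖B‖ · ‖U_B e − U_B s‖, where ‖B‖ is the spectral norm. Consequently, for any fixed vectors s₁, s₂ ∈ {−1,1}ⁿ, the quadratic form h(e) = (e+s₁)ᵀB(e+s₂) satisfies |h(e) − h(s)| ≤ 4√n · ‖B‖ · ‖U_B e − U_B s‖. -/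
/-! Orthonormality of the rows of `U_B` gives `U_B U_Bᵀ = 1` and `B = U_Bᵀ diag(ρ) U_B`, hence
`B = (B U_Bᵀ) U_B` with `U_Bᵀ` an isometry, so `‖B x‖ ≤ ‖B‖ ‖U_Bᵀ U_B x‖ = ‖B‖ ‖U_B x‖`.
For the quadratic form, symmetry of `B` gives
`h(e) - h(s) = (e + s₂)ᵀ B (e - s) + (s + s₁)ᵀ B (e - s)`; the vectors `e + s₂` and `s + s₁` have
entries in `[-2, 2]`, hence norm at most `2 √n`, and Cauchy–Schwarz concludes. -/

open Matrix

/-- Euclidean norm of a vector. -/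
noncomputable def en {n : ℕ} (v : Fin n → ℝ) : ℝ := Real.sqrt (∑ i, v i ^ 2)

section EuclideanNorm

variable {k m n : ℕ}

lemma en_eq_norm (v : Fin n → ℝ) : en v = ‖WithLp.toLp 2 v‖ := by
  simp [en, EuclideanSpace.norm_eq, sq_abs]

lemma en_eq_sqrt_dotProduct (v : Fin n → ℝ) : en v = √(v ⬝ᵥ v) := by
  simp [en, dotProduct, sq]

lemma en_mulVec_le (M : Matrix (Fin m) (Fin n) ℝ) (v : Fin n → ℝ) :
    en (M *ᵥ v) ≤ opN M * en v := by
  simpa [en_eq_norm, opN, Matrix.toLpLin_toLp, Matrix.toLin'_apply] using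
    (LinearMap.toContinuousLinearMap (Matrix.toEuclideanLin M)).le_opNorm (WithLp.toLp 2 v)

lemma abs_dotProduct_le_en_mul_en (x y : Fin n → ℝ) : |x ⬝ᵥ y| ≤ en x * en y := by
  simpa [en_eq_norm, EuclideanSpace.inner_toLp_toLp, dotProduct_comm] using
    abs_real_inner_le_norm (WithLp.toLp 2 x) (WithLp.toLp 2 y)

lemma en_le_sqrt_mul_of_abs_le {v : Fin n → ℝ} {c : ℝ} (hc : 0 ≤ c) (hv : ∀ i, |v i| ≤ c) :
    en v ≤ √n * c := by
  calc en v ≤ √(∑ _i : Fin n, c ^ 2) :=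
        Real.sqrt_le_sqrt <| Finset.sum_le_sum fun i _ =>
          sq_le_sq.mpr ((hv i).trans (le_abs_self c))
    _ = √n * c := by simp [Real.sqrt_mul, hc]

lemma en_add_le_of_mem_Icc {x y : Fin n → ℝ} (hx : ∀ i, x i ∈ Set.Icc (-1 : ℝ) 1)
    (hy : ∀ i, y i ∈ Set.Icc (-1 : ℝ) 1) : en (x + y) ≤ √n * 2 :=
  en_le_sqrt_mul_of_abs_le zero_le_two fun i =>
    (abs_add_le _ _).trans <| by linarith [abs_le.mpr (hx i), abs_le.mpr (hy i)]

lemma en_transpose_mulVec {U : Matrix (Fin m) (Fin n) ℝ} (hU : U * Uᵀ = 1) (c : Fin m → ℝ) :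
    en (Uᵀ *ᵥ c) = en c := by
  rw [en_eq_sqrt_dotProduct, en_eq_sqrt_dotProduct, dotProduct_mulVec, vecMul_transpose,
    mulVec_mulVec, hU, one_mulVec, dotProduct_comm]

theorem en_mulVec_le_opN_mul_en_mulVec {M : Matrix (Fin k) (Fin n) ℝ}
    {U : Matrix (Fin m) (Fin n) ℝ} (hU : U * Uᵀ = 1) (hMU : M * Uᵀ * U = M) (v : Fin n → ℝ) :
    en (M *ᵥ v) ≤ opN M * en (U *ᵥ v) := by
  calc en (M *ᵥ v) = en (M *ᵥ Uᵀ *ᵥ U *ᵥ v) := by rw [mulVec_mulVec, mulVec_mulVec, hMU]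
    _ ≤ opN M * en (Uᵀ *ᵥ U *ᵥ v) := en_mulVec_le _ _
    _ = opN M * en (U *ᵥ v) := by rw [en_transpose_mulVec hU]

end EuclideanNorm

section Factorization

variable {ι ν R : Type*} [CommSemiring R]

lemma sum_smul_vecMulVec_eq_transpose_mul_diagonal_mul [Fintype ι] [DecidableEq ι] (ρ : ι → R)
    (U : Matrix ι ν R) :
    ∑ i, ρ i • vecMulVec (U i) (U i) = Uᵀ * diagonal ρ * U := by
  ext j k
  simp [Matrix.sum_apply, vecMulVec_apply, mul_apply, diagonal, mul_comm, mul_left_comm]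

lemma mul_transpose_eq_one_of_orthonormal [DecidableEq ι] [Fintype ν] {U : Matrix ι ν R}
    (hU : ∀ i j, ∑ k, U i k * U j k = if i = j then 1 else 0) : U * Uᵀ = 1 := by
  ext i j
  simpa [mul_apply, one_apply] using hU i j

lemma isSymm_transpose_mul_diagonal_mul [Fintype ι] [DecidableEq ι] [Fintype ν] (ρ : ι → R)
    (U : Matrix ι ν R) :
    (Uᵀ * diagonal ρ * U).IsSymm := by
  simp [IsSymm, transpose_mul, Matrix.mul_assoc]

lemma transpose_mul_diagonal_mul_mul_transpose_mul [Fintype ι] [DecidableEq ι] [Fintype ν]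
    {U : Matrix ι ν R} (hU : U * Uᵀ = 1) (ρ : ι → R) :
    Uᵀ * diagonal ρ * U * Uᵀ * U = Uᵀ * diagonal ρ * U := by
  rw [Matrix.mul_assoc (Uᵀ * diagonal ρ * U), Matrix.mul_assoc _ U, ← Matrix.mul_assoc U, hU,
    Matrix.one_mul]

end Factorization

lemma Matrix.IsSymm.dotProduct_mulVec_add_sub {ν R : Type*} [Fintype ν] [CommRing R]
    {B : Matrix ν ν R} (hB : B.IsSymm) (e s a b : ν → R) :
    (e + a) ⬝ᵥ B *ᵥ (e + b) - (s + a) ⬝ᵥ B *ᵥ (s + b) =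
      (e + b) ⬝ᵥ B *ᵥ (e - s) + (s + a) ⬝ᵥ B *ᵥ (e - s) := by
  have hcomm : ∀ x y, x ⬝ᵥ B *ᵥ y = y ⬝ᵥ B *ᵥ x := fun x y => by
    rw [dotProduct_mulVec, dotProduct_comm, ← mulVec_transpose, hB.eq]
  rw [hcomm (e + b)]
  simp only [mulVec_add, mulVec_sub, dotProduct_add, dotProduct_sub, add_dotProduct,
    sub_dotProduct]
  ring

lemma mem_Icc_of_eq_one_or_eq_neg_one {x : ℝ} (hx : x = 1 ∨ x = -1) : x ∈ Set.Icc (-1 : ℝ) 1 := by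
  rcases hx with rfl | rfl <;> norm_num

theorem Matrix.IsSymm.abs_quadratic_sub_le {n : ℕ} {B : Matrix (Fin n) (Fin n) ℝ}
    (hB : B.IsSymm) {e s s₁ s₂ : Fin n → ℝ} (he : ∀ i, e i ∈ Set.Icc (-1 : ℝ) 1)
    (hs : ∀ i, s i ∈ Set.Icc (-1 : ℝ) 1) (hs₁ : ∀ i, s₁ i ∈ Set.Icc (-1 : ℝ) 1)
    (hs₂ : ∀ i, s₂ i ∈ Set.Icc (-1 : ℝ) 1) :
    |(e + s₁) ⬝ᵥ B *ᵥ (e + s₂) - (s + s₁) ⬝ᵥ B *ᵥ (s + s₂)| ≤ 4 * √n * en (B *ᵥ (e - s)) := by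
  rw [hB.dotProduct_mulVec_add_sub]
  have hnonneg : 0 ≤ en (B *ᵥ (e - s)) := Real.sqrt_nonneg _
  calc _ ≤ en (e + s₂) * en (B *ᵥ (e - s)) + en (s + s₁) * en (B *ᵥ (e - s)) :=
        (abs_add_le _ _).trans
          (add_le_add (abs_dotProduct_le_en_mul_en _ _) (abs_dotProduct_le_en_mul_en _ _))
    _ ≤ √n * 2 * en (B *ᵥ (e - s)) + √n * 2 * en (B *ᵥ (e - s)) := by
        gcongr
        exacts [en_add_le_of_mem_Icc he hs₂, en_add_le_of_mem_Icc hs hs₁]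
    _ = 4 * √n * en (B *ᵥ (e - s)) := by ring

theorem stmt4 (n m : ℕ) (ρ : Fin m → ℝ) (u : Fin m → Fin n → ℝ)
    (horth : ∀ i j : Fin m, ∑ k, u i k * u j k = if i = j then (1 : ℝ) else 0)
    (B : Matrix (Fin n) (Fin n) ℝ)
    (hB : B = ∑ i, ρ i • vecMulVec (u i) (u i))
    (UB : Matrix (Fin m) (Fin n) ℝ) (hUB : ∀ i, UB i = u i)
    (s₁ s₂ : Fin n → ℝ) (hs₁ : ∀ i, s₁ i = 1 ∨ s₁ i = -1) (hs₂ : ∀ i, s₂ i = 1 ∨ s₂ i = -1)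
    (e s : Fin n → ℝ) (he : ∀ i, e i ∈ Set.Icc (-1 : ℝ) 1)
    (hs : ∀ i, s i ∈ Set.Icc (-1 : ℝ) 1) :
    en (B.mulVec (e - s)) ≤ opN B * en (UB.mulVec e - UB.mulVec s) ∧
    |dotProduct (e + s₁) (B.mulVec (e + s₂)) - dotProduct (s + s₁) (B.mulVec (s + s₂))|
      ≤ 4 * Real.sqrt n * opN B * en (UB.mulVec e - UB.mulVec s) := by
  obtain rfl : UB = u := funext hUB
  have hUU : UB * UBᵀ = 1 := mul_transpose_eq_one_of_orthonormal horth
  rw [sum_smul_vecMulVec_eq_transpose_mul_diagonal_mul] at hB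
  have hbound : en (B *ᵥ (e - s)) ≤ opN B * en (UB *ᵥ e - UB *ᵥ s) := by
    rw [← mulVec_sub]
    exact en_mulVec_le_opN_mul_en_mulVec hUU
      (hB ▸ transpose_mul_diagonal_mul_mul_transpose_mul hUU ρ) (e - s)
  refine ⟨hbound, ?_⟩
  calc _ ≤ 4 * √n * en (B *ᵥ (e - s)) :=
        (hB ▸ isSymm_transpose_mul_diagonal_mul ρ UB).abs_quadratic_sub_le he hs
          (fun i => mem_Icc_of_eq_one_or_eq_neg_one (hs₁ i))
          (fun i => mem_Icc_of_eq_one_or_eq_neg_one (hs₂ i))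
    _ ≤ 4 * √n * (opN B * en (UB *ᵥ e - UB *ᵥ s)) := by gcongr
    _ = _ := by ring
end

section
/- Let Q̄(α,0) = (α+1)² log((α+1)²) + (α−1)² log((α−1)²) + 2(1−α²) log(1−α²) − 2·2(1+α) log(2(1+α)) − 2·2(1−α) log(2(1−α)) for α ∈ (−1,1). Then Q̄(α,0) is constant in α, equal to its value at α = 0. -/
/-- The population DCSBM log-likelihood along the line `β = 0`. -/
noncomputable def Qzero (a : ℝ) : ℝ :=
  (a + 1) ^ 2 * Real.log ((a + 1) ^ 2) + (a - 1) ^ 2 * Real.log ((a - 1) ^ 2)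
    + 2 * (1 - a ^ 2) * Real.log (1 - a ^ 2)
    - 2 * (2 * (1 + a)) * Real.log (2 * (1 + a))
    - 2 * (2 * (1 - a)) * Real.log (2 * (1 - a))

theorem stmt9 : ∀ α ∈ Set.Ioo (-1 : ℝ) 1, Qzero α = Qzero 0 := by
  rintro α ⟨h1, h2⟩
  have hp : (0:ℝ) < 1 + α := by linarith
  have hm : (0:ℝ) < 1 - α := by linarith
  have e1 : Real.log ((α + 1) ^ 2) = 2 * Real.log (1 + α) := by
    rw [show ((α+1):ℝ)^2 = (1+α)^2 by ring, Real.log_pow]; push_cast; ring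
  have e2 : Real.log ((α - 1) ^ 2) = 2 * Real.log (1 - α) := by
    rw [show ((α-1):ℝ)^2 = (1-α)^2 by ring, Real.log_pow]; push_cast; ring
  have e3 : Real.log (1 - α ^ 2) = Real.log (1 + α) + Real.log (1 - α) := by
    rw [show (1 - α^2 : ℝ) = (1+α)*(1-α) by ring, Real.log_mul hp.ne' hm.ne']
  have e4 : Real.log (2 * (1 + α)) = Real.log 2 + Real.log (1 + α) :=
    Real.log_mul two_ne_zero hp.ne'
  have e5 : Real.log (2 * (1 - α)) = Real.log 2 + Real.log (1 - α) :=
    Real.log_mul two_ne_zero hm.ne'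
  have h0 : Qzero 0 = -8 * Real.log 2 := by
    simp [Qzero, Real.log_one]
    ring
  rw [h0]
  unfold Qzero
  rw [e1, e2, e3, e4, e5]
  ring
end

section
/- Fix n̄₁ + n̄₂ = n and let c ∈ {−1,1}ⁿ have first n̄₁ entries +1 and last n̄₂ entries −1. Let ξ₁, ξ₂ ∈ ℝ² be vectors with ‖ξ₁‖ ≥ δ/√n, ‖ξ₂‖ ≥ δ/√n for some δ > 0, and with the angle between ξ₁ and ξ₂ bounded: |sin∠(ξ₁,ξ₂)| ≥ θ > 0. Let U be the 2×n matrix whose first n̄₁ columns equal ξ₁ and last n̄₂ columns equal ξ₂. Then there is a constant M = M(δ,θ) > 0 such that for every e ∈ {−1,1}ⁿ, ‖c − e‖² ≤ M √n ‖Uc − Ue‖. -/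
open Matrix Finset

private lemma cs2 (w0 w1 x0 x1 : ℝ) :
    |w0 * x1 - w1 * x0| ≤ Real.sqrt (w0 ^ 2 + w1 ^ 2) * Real.sqrt (x0 ^ 2 + x1 ^ 2) := by
  rw [← Real.sqrt_sq_eq_abs, ← Real.sqrt_mul (by positivity)]
  apply Real.sqrt_le_sqrt
  nlinarith [sq_nonneg (w0 * x0 + w1 * x1)]

private lemma key14 (δ θ : ℝ) (hδ : 0 < δ) (hθ : 0 < θ) (n : ℕ) (hn : 0 < n)
    (ξ₁ ξ₂ : Fin 2 → ℝ)
    (h1 : δ / Real.sqrt n ≤ Real.sqrt (ξ₁ 0 ^ 2 + ξ₁ 1 ^ 2))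
    (h2 : δ / Real.sqrt n ≤ Real.sqrt (ξ₂ 0 ^ 2 + ξ₂ 1 ^ 2))
    (hang : θ * (Real.sqrt (ξ₁ 0 ^ 2 + ξ₁ 1 ^ 2) * Real.sqrt (ξ₂ 0 ^ 2 + ξ₂ 1 ^ 2))
      ≤ |ξ₁ 0 * ξ₂ 1 - ξ₁ 1 * ξ₂ 0|)
    (a b : ℝ) (ha : 0 ≤ a) (hb : 0 ≤ b) :
    2 * (a + b) ≤ 4 / (θ * δ) * Real.sqrt n *
      Real.sqrt ((a * ξ₁ 0 - b * ξ₂ 0) ^ 2 + (a * ξ₁ 1 - b * ξ₂ 1) ^ 2) := by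
  have hsnpos : (0:ℝ) < Real.sqrt n := Real.sqrt_pos.mpr (by exact_mod_cast hn)
  set sn := Real.sqrt n with hsn
  set N1 := Real.sqrt (ξ₁ 0 ^ 2 + ξ₁ 1 ^ 2) with hN1d
  set N2 := Real.sqrt (ξ₂ 0 ^ 2 + ξ₂ 1 ^ 2) with hN2d
  have hN1 : 0 < N1 := lt_of_lt_of_le (by positivity) h1
  have hN2 : 0 < N2 := lt_of_lt_of_le (by positivity) h2
  set w0 := a * ξ₁ 0 - b * ξ₂ 0 with hw0
  set w1 := a * ξ₁ 1 - b * ξ₂ 1 with hw1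
  set r := Real.sqrt (w0 ^ 2 + w1 ^ 2) with hr
  have hrnn : 0 ≤ r := Real.sqrt_nonneg _
  have hda : a * |ξ₁ 0 * ξ₂ 1 - ξ₁ 1 * ξ₂ 0| ≤ r * N2 := by
    have heq : a * (ξ₁ 0 * ξ₂ 1 - ξ₁ 1 * ξ₂ 0) = w0 * ξ₂ 1 - w1 * ξ₂ 0 := by
      rw [hw0, hw1]; ring
    calc a * |ξ₁ 0 * ξ₂ 1 - ξ₁ 1 * ξ₂ 0| = |w0 * ξ₂ 1 - w1 * ξ₂ 0| := by
          rw [← abs_of_nonneg ha, ← abs_mul, heq]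
      _ ≤ r * N2 := cs2 _ _ _ _
  have hdb : b * |ξ₁ 0 * ξ₂ 1 - ξ₁ 1 * ξ₂ 0| ≤ r * N1 := by
    have heq : b * (ξ₁ 0 * ξ₂ 1 - ξ₁ 1 * ξ₂ 0) = w0 * ξ₁ 1 - w1 * ξ₁ 0 := by
      rw [hw0, hw1]; ring
    calc b * |ξ₁ 0 * ξ₂ 1 - ξ₁ 1 * ξ₂ 0| = |w0 * ξ₁ 1 - w1 * ξ₁ 0| := by
          rw [← abs_of_nonneg hb, ← abs_mul, heq]
      _ ≤ r * N1 := cs2 _ _ _ _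
  -- a * θ * N1 ≤ r
  have haN : a * θ * N1 ≤ r := by
    have h := le_trans (mul_le_mul_of_nonneg_left hang ha) hda
    have : a * θ * N1 * N2 ≤ r * N2 := by nlinarith
    exact le_of_mul_le_mul_right this hN2
  have hbN : b * θ * N2 ≤ r := by
    have h := le_trans (mul_le_mul_of_nonneg_left hang hb) hdb
    have : b * θ * N2 * N1 ≤ r * N1 := by nlinarith
    exact le_of_mul_le_mul_right this hN1
  have haf : a * θ * δ ≤ r * sn := by
    have h0 : a * θ * (δ / sn) ≤ a * θ * N1 :=
      mul_le_mul_of_nonneg_left h1 (by positivity)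
    have hle := le_trans h0 haN
    calc a * θ * δ = a * θ * (δ / sn) * sn := by field_simp
      _ ≤ r * sn := mul_le_mul_of_nonneg_right hle hsnpos.le
  have hbf : b * θ * δ ≤ r * sn := by
    have h0 : b * θ * (δ / sn) ≤ b * θ * N2 :=
      mul_le_mul_of_nonneg_left h2 (by positivity)
    have hle := le_trans h0 hbN
    calc b * θ * δ = b * θ * (δ / sn) * sn := by field_simp
      _ ≤ r * sn := mul_le_mul_of_nonneg_right hle hsnpos.le
  rw [div_mul_eq_mul_div, div_mul_eq_mul_div, le_div_iff₀ (by positivity)]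
  nlinarith

theorem stmt14 (δ θ : ℝ) (hδ : 0 < δ) (hθ : 0 < θ) :
    ∃ M : ℝ, 0 < M ∧
      ∀ (n n1 n2 : ℕ), n = n1 + n2 → 0 < n →
      ∀ ξ₁ ξ₂ : Fin 2 → ℝ,
        δ / Real.sqrt n ≤ Real.sqrt (ξ₁ 0 ^ 2 + ξ₁ 1 ^ 2) →
        δ / Real.sqrt n ≤ Real.sqrt (ξ₂ 0 ^ 2 + ξ₂ 1 ^ 2) →
        θ * (Real.sqrt (ξ₁ 0 ^ 2 + ξ₁ 1 ^ 2) * Real.sqrt (ξ₂ 0 ^ 2 + ξ₂ 1 ^ 2))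
            ≤ |ξ₁ 0 * ξ₂ 1 - ξ₁ 1 * ξ₂ 0| →
      ∀ U : Matrix (Fin 2) (Fin n) ℝ,
        (∀ j : Fin n, (fun i => U i j) = if (j : ℕ) < n1 then ξ₁ else ξ₂) →
      ∀ c e : Fin n → ℝ,
        (∀ j : Fin n, c j = if (j : ℕ) < n1 then 1 else -1) →
        (∀ j, e j = 1 ∨ e j = -1) →
        ∑ j, (c j - e j) ^ 2 ≤ M * Real.sqrt n *
          Real.sqrt ((U.mulVec c 0 - U.mulVec e 0) ^ 2
            + (U.mulVec c 1 - U.mulVec e 1) ^ 2) := by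
  refine ⟨4 / (θ * δ), by positivity, ?_⟩
  intro n n1 n2 hn hnpos ξ₁ ξ₂ h1 h2 hang U hU c e hc he
  have hUij : ∀ (i : Fin 2) (j : Fin n), U i j = if (j : ℕ) < n1 then ξ₁ i else ξ₂ i := by
    intro i j
    have h := congrFun (hU j) i
    by_cases hj : (j : ℕ) < n1 <;> simp [hj] at h ⊢ <;> exact h
  set a : ℝ := ∑ j ∈ univ.filter (fun j : Fin n => (j : ℕ) < n1), (1 - e j) with hadef
  set b : ℝ := ∑ j ∈ univ.filter (fun j : Fin n => ¬ (j : ℕ) < n1), (1 + e j) with hbdef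
  have ha : 0 ≤ a := Finset.sum_nonneg fun j _ => by rcases he j with h | h <;> simp [h] <;> norm_num
  have hb : 0 ≤ b := Finset.sum_nonneg fun j _ => by rcases he j with h | h <;> simp [h] <;> norm_num
  have hsum : ∑ j, (c j - e j) ^ 2 = 2 * (a + b) := by
    rw [← Finset.sum_filter_add_sum_filter_not univ (fun j : Fin n => (j : ℕ) < n1)]
    have e1 : ∑ j ∈ univ.filter (fun j : Fin n => (j : ℕ) < n1), (c j - e j) ^ 2
        = ∑ j ∈ univ.filter (fun j : Fin n => (j : ℕ) < n1), 2 * (1 - e j) := by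
      apply Finset.sum_congr rfl
      intro j hj
      simp only [Finset.mem_filter] at hj
      rw [hc j, if_pos hj.2]
      rcases he j with h | h <;> rw [h] <;> norm_num
    have e2 : ∑ j ∈ univ.filter (fun j : Fin n => ¬ (j : ℕ) < n1), (c j - e j) ^ 2
        = ∑ j ∈ univ.filter (fun j : Fin n => ¬ (j : ℕ) < n1), 2 * (1 + e j) := by
      apply Finset.sum_congr rfl
      intro j hj
      simp only [Finset.mem_filter] at hj
      rw [hc j, if_neg hj.2]
      rcases he j with h | h <;> rw [h] <;> norm_num
    rw [e1, e2, ← Finset.mul_sum, ← Finset.mul_sum, ← hadef, ← hbdef]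
    ring
  have hmv : ∀ i : Fin 2, U.mulVec c i - U.mulVec e i = a * ξ₁ i - b * ξ₂ i := by
    intro i
    simp only [Matrix.mulVec, dotProduct]
    rw [← Finset.sum_sub_distrib]
    have hsplit : ∀ j : Fin n, U i j * c j - U i j * e j = U i j * (c j - e j) := fun j => by ring
    simp_rw [hsplit]
    rw [← Finset.sum_filter_add_sum_filter_not univ (fun j : Fin n => (j : ℕ) < n1)]
    have e1 : ∑ j ∈ univ.filter (fun j : Fin n => (j : ℕ) < n1), U i j * (c j - e j)
        = ξ₁ i * a := by
      rw [hadef, Finset.mul_sum]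
      apply Finset.sum_congr rfl
      intro j hj
      simp only [Finset.mem_filter] at hj
      rw [hUij i j, if_pos hj.2, hc j, if_pos hj.2]
    have e2 : ∑ j ∈ univ.filter (fun j : Fin n => ¬ (j : ℕ) < n1), U i j * (c j - e j)
        = -(ξ₂ i * b) := by
      rw [hbdef, Finset.mul_sum, ← Finset.sum_neg_distrib]
      apply Finset.sum_congr rfl
      intro j hj
      simp only [Finset.mem_filter] at hj
      rw [hUij i j, if_neg hj.2, hc j, if_neg hj.2]
      ring
    rw [e1, e2]
    ring
  rw [hsum, hmv 0, hmv 1]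
  exact key14 δ θ hδ hθ n hnpos ξ₁ ξ₂ h1 h2 hang a b ha hb
end
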